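/- Let ũ ∈ Ũ₀ contain at least one position of type v, and suppose some separating composition of ũ has a part equal to 1. Then for every partition λ (a composition with weakly decreasing parts), the sum Σ_μ φ_ũ(μ), taken over all distinct compositions μ obtained by permuting the parts of λ, equals either 0 or +∞. -/

import Mathlib

open scoped ENNReal NNReal

namespace GK

/-! ## The Gnedin–Kingman graph -/

/-- Decrement (if the part is ≥ 2) or delete (otherwise) the part of `μ` at position `p`. -/
def stepAt (μ : List ℕ) (p : ℕ) : List ℕ :=
  if 2 ≤ μ.getD p 0 then μ.set p (μ.getD p 0 - 1) else μ.eraseIdx p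

/-- Edge multiplicity `κ(ν,μ)` of the Gnedin–Kingman graph: the number of positions of `μ`
at which decrementing a part ≥ 2 (or deleting a part equal to 1) produces `ν`. -/
def kappa (ν μ : List ℕ) : ℕ :=
  ((Finset.range μ.length).filter fun p => stepAt μ p = ν).card

/-- `ν ↗ μ`. -/
def Rel (ν μ : List ℕ) : Prop := 0 < kappa ν μ

def IsComposition (l : List ℕ) : Prop := ∀ n ∈ l, 0 < n

/-- Compositions: finite lists of positive integers. -/
abbrev Comp := {l : List ℕ // IsComposition l}

/-- The empty composition ∅. -/
def cEmpty : Comp := ⟨[], fun _ h => nomatch h⟩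

/-- Harmonicity, for `[0,∞]`-valued functions on the Gnedin–Kingman graph
(with the conventions `0·∞ = 0` and `x + ∞ = ∞` of `ℝ≥0∞`). -/
def HarmonicE (φ : Comp → ℝ≥0∞) : Prop :=
  ∀ l : Comp, φ l = ∑' μ : Comp, (kappa l.1 μ.1 : ℝ≥0∞) * φ μ

/-- Harmonicity, for real-valued functions. -/
def HarmonicR (φ : Comp → ℝ) : Prop :=
  ∀ l : Comp, φ l = ∑' μ : Comp, (kappa l.1 μ.1 : ℝ) * φ μ

/-- A finite harmonic function: real-valued (hence finite), nonnegative, harmonic. -/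
def FiniteHarmonic (φ : Comp → ℝ) : Prop :=
  HarmonicR φ ∧ ∀ l, 0 ≤ φ l

/-- The quasi-shuffle coefficient `c^γ_{α,β}`: the number of pairs of strictly increasing
maps `f, g` into the positions of `γ` which jointly cover all positions of `γ` and such that
each part of `γ` is the sum of the corresponding parts of `α` and `β`. -/
noncomputable def qsCoeff (α β γ : List ℕ) : ℕ :=
  Nat.card {fg : (Fin α.length → Fin γ.length) × (Fin β.length → Fin γ.length) //
    StrictMono fg.1 ∧ StrictMono fg.2 ∧
    (∀ s, (∃ i, fg.1 i = s) ∨ (∃ j, fg.2 j = s)) ∧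
    ∀ s : Fin γ.length,
      γ.get s = (∑ i, if fg.1 i = s then α.get i else 0) +
                (∑ j, if fg.2 j = s then β.get j else 0)}

/-- Indecomposability of a finite harmonic function normalized at ∅. -/
def IndecFin (φ : Comp → ℝ) : Prop :=
  ∀ φ₁ φ₂ : Comp → ℝ, FiniteHarmonic φ₁ → FiniteHarmonic φ₂ →
    φ₁ cEmpty = 1 → φ₂ cEmpty = 1 →
    ∀ c₁ c₂ : ℝ, 0 < c₁ → 0 < c₂ → c₁ + c₂ = 1 →
      (∀ l, φ l = c₁ * φ₁ l + c₂ * φ₂ l) → φ = φ₁ ∨ φ = φ₂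

/-! ## Typed weight sequences, `M°_λ` and `U₀` -/

/-- `M°_λ(v)` for a typed weight sequence `v` (`true` = h, `false` = v): the sum over all
decompositions of `λ` into consecutive (possibly empty) blocks, one for each entry of `v`,
where an h-block has at most one part and contributes `w^{|block|}`, and a v-block has all
parts equal to 1 and contributes `w^{ℓ}/ℓ!`. -/
noncomputable def Mcirc : List (ℝ × Bool) → List ℕ → ℝ
  | [], l => if l = [] then 1 else 0
  | (w, t) :: v, l =>
      ∑ i ∈ Finset.range (l.length + 1),
        (if t then (if (l.take i).length ≤ 1 then w ^ (l.take i).sum else 0)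
         else if ∀ n ∈ l.take i, n = 1 then
           w ^ (l.take i).length / ((l.take i).length.factorial : ℝ)
         else 0) * Mcirc v (l.drop i)

/-- Membership in `U₀`: positive weights of total sum 1, no two consecutive v's. -/
def memU0 (u : List (ℝ × Bool)) : Prop :=
  (∀ p ∈ u, 0 < p.1) ∧ (u.map Prod.fst).sum = 1 ∧
    List.Chain' (fun p q => p.2 = true ∨ q.2 = true) u

/-- `t_n(u)`: replace each h-interval by a part `n` and each v-interval by `n` ones. -/
def tnU (u : List (ℝ × Bool)) (n : ℕ) : List ℕ :=
  (u.map fun p => if p.2 then [n] else List.replicate n 1).flatten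

/-- Merge each maximal run of consecutive v-intervals into a single v-interval,
summing the weights. -/
def mergeV : List (ℝ × Bool) → List (ℝ × Bool)
  | [] => []
  | (w, true) :: rest => (w, true) :: mergeV rest
  | (w, false) :: rest =>
      match mergeV rest with
      | (w', false) :: rest' => (w + w', false) :: rest'
      | r => (w, false) :: r

/-! ## The set `Ũ₀` and the functions `φ_ũ` -/

/-- An element of `Ũ₀`. `t i = true` means type h, `false` means type v; `sep i` are the
separating compositions λ₀, …, λ_m. Only `w i`, `t i` for `i < m` and `sep i` for `i ≤ m`
are relevant. -/
structure UTilde where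
  m : ℕ
  w : ℕ → ℝ
  t : ℕ → Bool
  sep : ℕ → List ℕ
  sep_pos : ∀ i, i ≤ m → ∀ n ∈ sep i, 0 < n
  sep_nonempty : ∃ i, i ≤ m ∧ sep i ≠ []
  w_pos : ∀ i, i < m → 0 < w i
  w_sum : ∑ i ∈ Finset.range m, w i = 1
  vv : ∀ i, i + 1 < m → t i = false → t (i + 1) = false → sep (i + 1) ≠ []
  v_left : ∀ i, i < m → t i = false → sep i ≠ [] → 2 ≤ (sep i).getLastD 0
  v_right : ∀ i, i < m → t i = false → sep (i + 1) ≠ [] → 2 ≤ (sep (i + 1)).headD 0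

namespace UTilde

variable (u : UTilde)

/-- `λ₀ ⊔ f 0 ⊔ λ₁ ⊔ … ⊔ f (m-1) ⊔ λ_m`. -/
def blocks (f : ℕ → List ℕ) : List ℕ :=
  u.sep 0 ++ (List.ofFn fun i : Fin u.m => f (i : ℕ) ++ u.sep ((i : ℕ) + 1)).flatten

/-- `t_n(ũ)`. -/
def tn (n : ℕ) : List ℕ :=
  u.blocks fun i => if u.t i then [n] else List.replicate n 1

/-- Membership in `GK_ũ`. -/
def GKmem (l : List ℕ) : Prop := ∃ n, 1 ≤ n ∧ Relation.ReflTransGen Rel l (u.tn n)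

/-- Position `i` (of type h) is adjacent to a v-interval. -/
def adj (i : ℕ) : Prop :=
  (0 < i ∧ u.t (i - 1) = false ∧ u.sep i = []) ∨
  (i + 1 < u.m ∧ u.t (i + 1) = false ∧ u.sep (i + 1) = [])

instance (i : ℕ) : Decidable (u.adj i) := by unfold adj; infer_instance

def d (i : ℕ) : ℕ := if u.adj i then 2 else 1

/-- `λ(a,b)`, where `c` encodes both vectors: `a i = c i` on h-positions and
`b i = c i` on v-positions. -/
def lam (c : ℕ → ℕ) : List ℕ :=
  u.blocks fun i => if u.t i then [u.d i + c i] else List.replicate (c i) 1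

/-- `λ_ũ = λ(0,0)`. -/
def lam0 : List ℕ := u.lam fun _ => 0

/-- `Π_{i : t_i = h} w_i^{a_i} · Π_{i : t_i = v} w_i^{b_i}/b_i!`. -/
noncomputable def phiVal (c : ℕ → ℕ) : ℝ≥0∞ :=
  ∏ i ∈ Finset.range u.m,
    if u.t i then ENNReal.ofReal (u.w i) ^ c i
    else ENNReal.ofReal (u.w i) ^ c i / ((c i).factorial : ℝ≥0∞)

open Classical in
/-- The semifinite harmonic function `φ_ũ`. -/
noncomputable def phi (l : List ℕ) : ℝ≥0∞ :=
  if h : ∃ c : ℕ → ℕ, l = u.lam c then u.phiVal h.choose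
  else if u.GKmem l then ⊤ else 0

/-- `u^ε(ũ)`: each part of each separating composition is replaced by an h-interval
of length `ε`. -/
def uEps (ε : ℝ) : List (ℝ × Bool) :=
  ((u.sep 0).map fun _ => (ε, true)) ++
    (List.ofFn fun i : Fin u.m =>
      (u.w (i : ℕ), u.t (i : ℕ)) :: ((u.sep ((i : ℕ) + 1)).map fun _ => (ε, true))).flatten

/-- `n(ũ) = |λ₀| + … + |λ_m|`. -/
def nU : ℕ := ∑ i ∈ Finset.range (u.m + 1), (u.sep i).sum

/-- The list of intervals of `ũ` (separating compositions dropped). -/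
def ubarList : List (ℝ × Bool) := List.ofFn fun i : Fin u.m => (u.w (i : ℕ), u.t (i : ℕ))

end UTilde

/-! ## The cone `K` and the maps `F_φ` -/

/-- `V`: finitely supported real functions on compositions. -/
abbrev V := Comp →₀ ℝ

/-- `W`: span of the vectors `e_λ − Σ_μ κ(λ,μ)·e_μ`. -/
noncomputable def Wsub : Submodule ℝ V :=
  Submodule.span ℝ
    {x : V | ∃ l : Comp, ∀ μ : Comp, x μ = (if μ = l then 1 else 0) - (kappa l.1 μ.1 : ℝ)}

/-- `R = V/W`. -/
abbrev Rq := V ⧸ Wsub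

/-- The cone `K ⊆ R`: classes of nonnegative vectors. -/
def Kcone : Set Rq :=
  {a | ∃ x : V, (∀ μ, 0 ≤ x μ) ∧ Submodule.Quotient.mk x = a}

/-- `Σ_λ x(λ)·φ(λ)` for a representative `x`. -/
noncomputable def FphiV (φ : Comp → ℝ≥0∞) (x : V) : ℝ≥0∞ :=
  ∑' μ : Comp, ENNReal.ofReal (x μ) * φ μ

open Classical in
/-- `F_φ : K → [0,∞]` (defined via a choice of nonnegative representative; for harmonic `φ`
it is well defined). Outside `K` we set it to `0`. -/
noncomputable def Fphi (φ : Comp → ℝ≥0∞) (a : Rq) : ℝ≥0∞ :=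
  if h : a ∈ Kcone then FphiV φ h.choose else 0

/-- Semifiniteness: not finite, and `F_φ` is determined by its finite values from below. -/
def Semifinite (φ : Comp → ℝ≥0∞) : Prop :=
  (¬ ∀ l, φ l < ⊤) ∧
    ∀ a ∈ Kcone, Fphi φ a =
      sSup {y | ∃ b ∈ Kcone, a - b ∈ Kcone ∧ Fphi φ b < ⊤ ∧ y = Fphi φ b}

/-- Indecomposability of a semifinite harmonic function. -/
def IndecSemifinite (φ : Comp → ℝ≥0∞) : Prop :=
  ∀ ψ : Comp → ℝ≥0∞, HarmonicE ψ →
    (((∀ l, ψ l < ⊤) ∧ ψ ≠ 0) ∨ Semifinite ψ) →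
    (∀ a ∈ Kcone, Fphi ψ a ≤ Fphi φ a) →
    ∃ c : ℝ≥0, ∀ l, ψ l = (c : ℝ≥0∞) * φ l

end GK

/-!
Suppose some permutation `μ` of `λ` has `φ_ũ(μ) ≠ 0`. If `μ` is not of the form `λ(a,b)`, then
`φ_ũ(μ) = +∞`. Otherwise move a part `1` of a separating composition into the run of ones of a
v-interval: the result `X` is again a permutation of `λ`, lies below `t_n(ũ)` for large `n`, and
is not of the form `λ(a',b')`, so `φ_ũ(X) = +∞`.

For the last point, the compositions `λ(a,b)` are the words matched by a pattern of tokens: the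
parts of the separating compositions, a part `≥ d_i` for each h-interval and a run of ones for
each v-interval. The conditions defining `Ũ₀` (with `d_i = 2` next to a v-interval) say that every
v-token has neighbours forcing parts `≥ 2`. A match of the full pattern and a match of the
pattern without the token of the moved `1` therefore agree token by token up to that token, after
which the rest of the pattern would have to match both a word and the word preceded by `1`.
-/

namespace GK

open Relation

theorem replicate_one_append_cancel {b b' y y' : ℕ} {X X' : List ℕ} (hy : 2 ≤ y)
    (hy' : 2 ≤ y') (h : List.replicate b 1 ++ y :: X = List.replicate b' 1 ++ y' :: X') :
    y :: X = y' :: X' := by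
  induction b generalizing b' with
  | zero =>
    cases b' with
    | zero => simpa using h
    | succ b' => simp [List.replicate_succ] at h; omega
  | succ b ih =>
    cases b' with
    | zero => simp [List.replicate_succ] at h; omega
    | succ b' => exact ih (by simpa [List.replicate_succ] using h)

theorem mem_head?_of_mem_head?_flatten_ofFn {α : Type*} {n : ℕ} {f : Fin n → List α}
    (hf : ∀ i, f i ≠ []) {y : α} (hy : y ∈ (List.ofFn f).flatten.head?) :
    ∃ h : 0 < n, y ∈ (f ⟨0, h⟩).head? := by
  cases n with
  | zero => simp at hy
  | succ n =>
    rw [List.ofFn_succ, List.flatten_cons, List.head?_append_of_ne_nil _ (hf 0)] at hy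
    exact ⟨n.succ_pos, hy⟩

inductive Tok where
  | part (z : ℕ)
  | h (d : ℕ)
  | v

namespace Tok

def Matches : Tok → List ℕ → Prop
  | part z, x => x = [z]
  | h d, x => ∃ a, x = [d + a]
  | v, x => ∃ b, x = List.replicate b 1

def Big : Tok → Prop
  | part z => 2 ≤ z
  | h d => 2 ≤ d
  | v => False

def tn (n : ℕ) : Tok → List ℕ
  | part z => [z]
  | h _ => [n]
  | v => List.replicate n 1

theorem Matches.exists_eq_singleton {t : Tok} {x : List ℕ} (hx : t.Matches x) (ht : t ≠ v) :
    ∃ y, x = [y] ∧ (t.Big → 2 ≤ y) := by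
  cases t with
  | part z => exact ⟨z, hx, id⟩
  | h d =>
    obtain ⟨a, rfl⟩ := hx
    exact ⟨d + a, rfl, fun hd : 2 ≤ d => by omega⟩
  | v => exact absurd rfl ht

theorem ne_v_of_big {t : Tok} (ht : t.Big) : t ≠ v := by
  rintro rfl
  exact ht

end Tok

def Parses : List Tok → List ℕ → Prop
  | [], X => X = []
  | t :: T, X => ∃ x X', X = x ++ X' ∧ t.Matches x ∧ Parses T X'

theorem parses_append_iff {S T : List Tok} {X : List ℕ} :
    Parses (S ++ T) X ↔ ∃ X₁ X₂, X = X₁ ++ X₂ ∧ Parses S X₁ ∧ Parses T X₂ := by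
  induction S generalizing X with
  | nil => simp [Parses]
  | cons t S ih =>
    simp only [List.cons_append, Parses, ih]
    constructor
    · rintro ⟨x, _, rfl, hx, X₁, X₂, rfl, h₁, h₂⟩
      exact ⟨x ++ X₁, X₂, by simp, ⟨x, X₁, rfl, hx, h₁⟩, h₂⟩
    · rintro ⟨_, X₂, rfl, ⟨x, X₁, rfl, hx, h₁⟩, h₂⟩
      exact ⟨x, X₁ ++ X₂, by simp, hx, X₁, X₂, rfl, h₁, h₂⟩

theorem Parses.append {S T : List Tok} {X₁ X₂ : List ℕ} (h₁ : Parses S X₁)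
    (h₂ : Parses T X₂) : Parses (S ++ T) (X₁ ++ X₂) :=
  parses_append_iff.2 ⟨X₁, X₂, rfl, h₁, h₂⟩

theorem parses_map_part (s : List ℕ) : Parses (s.map .part) s := by
  induction s with
  | nil => rfl
  | cons z s ih => exact ⟨[z], s, rfl, rfl, ih⟩

theorem parses_flatten_ofFn {m : ℕ} {P : Fin m → List Tok} {Q : Fin m → List ℕ}
    (h : ∀ i, Parses (P i) (Q i)) : Parses (List.ofFn P).flatten (List.ofFn Q).flatten := by
  induction m with
  | zero => rfl
  | succ m ih =>
    simp only [List.ofFn_succ, List.flatten_cons]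
    exact (h 0).append (ih fun i => h i.succ)

theorem Parses.exists_perm_cons_one {T : List Tok} {X : List ℕ} (h : Parses T X)
    (hv : Tok.v ∈ T) : ∃ Y, Y.Perm (1 :: X) ∧ Parses T Y := by
  induction T generalizing X with
  | nil => simp at hv
  | cons t T ih =>
    obtain ⟨x, X', rfl, hx, hX'⟩ := h
    by_cases ht : t = .v
    · subst ht
      obtain ⟨b, rfl⟩ := hx
      exact ⟨List.replicate (b + 1) 1 ++ X', by simp [List.replicate_succ],
        _, X', rfl, ⟨b + 1, rfl⟩, hX'⟩
    · obtain ⟨Y, hY, hTY⟩ := ih hX' ((List.mem_cons.1 hv).resolve_left (Ne.symm ht))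
      exact ⟨x ++ Y, (hY.append_left x).trans List.perm_middle, x, Y, rfl, hx, hTY⟩

theorem Parses.head_big {t : Tok} {T : List Tok} {X : List ℕ} (h : Parses (t :: T) X)
    (ht : t.Big) : ∃ y X', X = y :: X' ∧ 2 ≤ y := by
  obtain ⟨x, X', rfl, hx, -⟩ := h
  obtain ⟨y, rfl, hy⟩ := hx.exists_eq_singleton (Tok.ne_v_of_big ht)
  exact ⟨y, X', rfl, hy ht⟩

/-- The neighbours of a `v` token force parts `≥ 2`, so it matches a maximal run of ones and a
match of a guarded pattern is determined from left to right. -/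
def GuardedPair (s t : Tok) : Prop := (t = .v → s.Big) ∧ (s = .v → t.Big)

def Guarded (T : List Tok) : Prop := T.IsChain GuardedPair

theorem guarded_map_part (s : List ℕ) : Guarded (s.map .part) := by
  induction s with
  | nil => exact .nil
  | cons z s ih =>
    refine ih.cons fun y hy => ?_
    obtain ⟨z', -, rfl⟩ : ∃ z', _ ∧ Tok.part z' = y := by simpa using hy
    exact ⟨(nomatch ·), (nomatch ·)⟩

theorem Parses.exists_parses_and_parses_cons_one {C : List Tok} {S : List Tok} {X : List ℕ}
    (hG : Guarded (S ++ .part 1 :: C)) (hL : Parses (S ++ .part 1 :: C) X)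
    (hR : Parses (S ++ C) X) : ∃ X', Parses C X' ∧ Parses C (1 :: X') := by
  induction S generalizing X with
  | nil =>
    obtain ⟨_, X', rfl, rfl, hX'⟩ := hL
    exact ⟨X', hX', hR⟩
  | cons t S ih =>
    obtain ⟨x, X₁, rfl, hx, hL⟩ := hL
    obtain ⟨x', X₂, hX, hx', hR⟩ := hR
    suffices X₁ = X₂ by subst this; exact ih hG.tail hL hR
    by_cases ht : t = .v
    · subst ht
      obtain ⟨b, rfl⟩ := hx
      obtain ⟨b', rfl⟩ := hx'
      cases S with
      | nil => exact absurd ((List.isChain_cons_cons.1 hG).1.2 rfl) (by simp [Tok.Big])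
      | cons s S =>
        have hs : s.Big := (List.isChain_cons_cons.1 hG).1.2 rfl
        obtain ⟨y, Y₁, rfl, hy⟩ := hL.head_big hs
        obtain ⟨y', Y₂, rfl, hy'⟩ := hR.head_big hs
        exact replicate_one_append_cancel hy hy' hX
    · obtain ⟨y, rfl, -⟩ := hx.exists_eq_singleton ht
      obtain ⟨y', rfl, -⟩ := hx'.exists_eq_singleton ht
      exact (List.cons_eq_cons.1 hX).2

/-- Only a `v` token lets the surplus prefix `P` shrink, and it consumes ones only; the invariant
keeps a part `≥ 2` in `P` whenever the next token is `v`. -/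
theorem Parses.false_of_parses_append {C : List Tok} {P X : List ℕ} (hG : Guarded C)
    (hX : Parses C X) (hPX : Parses C (P ++ X)) (hP : P ≠ [])
    (hbig : (∃ x ∈ P, 2 ≤ x) ∨ C.head? ≠ some .v) : False := by
  induction C generalizing P X with
  | nil => exact hP (List.append_eq_nil_iff.1 hPX).1
  | cons t C ih =>
    obtain ⟨x, X₁, rfl, hx, hX₁⟩ := hX
    obtain ⟨x', Y, hY, hx', hY'⟩ := hPX
    by_cases ht : t = .v
    · subst ht
      obtain ⟨p, hpP, hp⟩ := hbig.resolve_right (by simp)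
      obtain ⟨b, rfl⟩ := hx
      obtain ⟨b', rfl⟩ := hx'
      obtain ⟨Q, hQ, -⟩ | ⟨P', rfl, rfl⟩ := List.append_eq_append_iff.1 hY
      · have := List.eq_of_mem_replicate (hQ ▸ List.mem_append_left Q hpP)
        omega
      · have hpP' : p ∈ P' := by
          rcases List.mem_append.1 hpP with h | h
          · have := List.eq_of_mem_replicate h
            omega
          · exact h
        exact ih hG.tail hX₁ (P := P' ++ List.replicate b 1) (by simpa using hY')
          (by simp [List.ne_nil_of_mem hpP'])
          (Or.inl ⟨p, List.mem_append_left _ hpP', hp⟩)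
    · obtain ⟨y, rfl, hy⟩ := hx.exists_eq_singleton ht
      obtain ⟨y', rfl, -⟩ := hx'.exists_eq_singleton ht
      obtain ⟨p, P', rfl⟩ := List.exists_cons_of_ne_nil hP
      simp only [List.cons_append, List.nil_append, List.cons.injEq] at hY
      obtain ⟨-, rfl⟩ := hY
      refine ih hG.tail hX₁ (P := P' ++ [y]) (by simpa using hY') (by simp) ?_
      by_cases hC : C.head? = some .v
      · cases C with
        | nil => simp at hC
        | cons c C =>
          obtain rfl : c = .v := by simpa using hC
          exact Or.inl ⟨y, by simp, hy ((List.isChain_cons_cons.1 hG).1.1 rfl)⟩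
      · exact Or.inr hC

theorem not_parses_of_parses_erase {S C : List Tok} {X : List ℕ}
    (hG : Guarded (S ++ .part 1 :: C)) (hX : Parses (S ++ C) X) :
    ¬ Parses (S ++ .part 1 :: C) X := by
  intro hX'
  obtain ⟨X', h₁, h₂⟩ := Parses.exists_parses_and_parses_cons_one hG hX' hX
  have hC : Guarded (.part 1 :: C) := hG.right_of_append
  refine Parses.false_of_parses_append hC.tail h₁ (P := [1]) h₂ (by simp) (Or.inr ?_)
  cases C with
  | nil => simp
  | cons c C =>
    rintro hc
    obtain rfl : c = .v := by simpa using hc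
    exact absurd ((List.isChain_cons_cons.1 hC).1.1 rfl) (by simp [Tok.Big])

theorem rel_iff {ν μ : List ℕ} : Rel ν μ ↔ ∃ p < μ.length, stepAt μ p = ν := by
  simp [Rel, kappa, Finset.card_pos, Finset.filter_nonempty_iff]

theorem stepAt_append_left (p y : List ℕ) (k : ℕ) :
    stepAt (p ++ y) (p.length + k) = p ++ stepAt y k := by
  simp only [stepAt, List.getD_append_right _ _ _ _ (Nat.le_add_right _ _),
    Nat.add_sub_cancel_left]
  split
  · simp [List.set_append_right]
  · simp [List.eraseIdx_append_of_length_le]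

theorem stepAt_append_right {y : List ℕ} (q : List ℕ) {k : ℕ} (hk : k < y.length) :
    stepAt (y ++ q) k = stepAt y k ++ q := by
  simp only [stepAt, List.getD_append _ _ _ _ hk]
  split
  · simp [List.set_append_left _ _ hk]
  · simp [List.eraseIdx_append_of_lt_length hk]

theorem Rel.append_left {ν μ : List ℕ} (p : List ℕ) (h : Rel ν μ) :
    Rel (p ++ ν) (p ++ μ) := by
  obtain ⟨k, hk, rfl⟩ := rel_iff.1 h
  exact rel_iff.2 ⟨p.length + k, by simpa using hk, stepAt_append_left p μ k⟩

theorem Rel.append_right {ν μ : List ℕ} (q : List ℕ) (h : Rel ν μ) :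
    Rel (ν ++ q) (μ ++ q) := by
  obtain ⟨k, hk, rfl⟩ := rel_iff.1 h
  exact rel_iff.2 ⟨k, by simp; omega, stepAt_append_right q hk⟩

theorem reflTransGen_rel_append {ν ν' μ μ' : List ℕ} (h : ReflTransGen Rel ν μ)
    (h' : ReflTransGen Rel ν' μ') : ReflTransGen Rel (ν ++ ν') (μ ++ μ') :=
  (h.lift (· ++ ν') fun _ _ => Rel.append_right ν').trans
    (h'.lift (μ ++ ·) fun _ _ => Rel.append_left μ)

theorem rel_nil_one : Rel [] [1] := rel_iff.2 ⟨0, by simp, rfl⟩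

theorem rel_singleton_succ {a : ℕ} (ha : 1 ≤ a) : Rel [a] [a + 1] :=
  rel_iff.2 ⟨0, by simp, by simp [stepAt]; omega⟩

theorem reflTransGen_rel_singleton {a b : ℕ} (ha : 1 ≤ a) (hab : a ≤ b) :
    ReflTransGen Rel [a] [b] := by
  induction b, hab using Nat.le_induction with
  | base => exact .refl
  | succ b hab ih => exact ih.tail (rel_singleton_succ (ha.trans hab))

theorem reflTransGen_rel_replicate_one {b n : ℕ} (hbn : b ≤ n) :
    ReflTransGen Rel (List.replicate b 1) (List.replicate n 1) := by
  induction n, hbn using Nat.le_induction with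
  | base => exact .refl
  | succ n _ ih =>
    simpa [List.replicate_succ] using ih.tail (rel_nil_one.append_right (List.replicate n 1))

theorem Parses.reflTransGen_flatMap_tn {T : List Tok} {X : List ℕ} (h : Parses T X) {n : ℕ}
    (hX : ∀ x ∈ X, 0 < x ∧ x ≤ n) (hlen : X.length ≤ n) :
    ReflTransGen Rel X (T.flatMap (Tok.tn n)) := by
  induction T generalizing X with
  | nil => obtain rfl := h; exact .refl
  | cons t T ih =>
    obtain ⟨x, X', rfl, hx, hX'⟩ := h
    simp only [List.mem_append, List.length_append] at hX hlen
    rw [List.flatMap_cons]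
    refine reflTransGen_rel_append ?_ (ih hX' (fun y hy => hX y (.inr hy)) (by omega))
    cases t with
    | part z => obtain rfl := hx; exact .refl
    | h d =>
      obtain ⟨a, rfl⟩ := hx
      have := hX _ (.inl (List.mem_singleton_self _))
      exact reflTransGen_rel_singleton this.1 this.2
    | v =>
      obtain ⟨b, rfl⟩ := hx
      exact reflTransGen_rel_replicate_one (by simp at hlen; omega)

namespace UTilde

variable (u : UTilde)

def slot (i : ℕ) : Tok := if u.t i then .h (u.d i) else .v

def toks : List Tok :=
  (u.sep 0).map .part ++
    (List.ofFn fun i : Fin u.m => u.slot i :: (u.sep (i + 1)).map .part).flatten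

theorem parses_toks_lam (c : ℕ → ℕ) : Parses u.toks (u.lam c) := by
  refine (parses_map_part _).append
    (parses_flatten_ofFn fun i => ⟨_, _, rfl, ?_, parses_map_part _⟩)
  by_cases ht : u.t i <;> simp [slot, ht, Tok.Matches]

theorem flatMap_tn_toks (n : ℕ) : u.toks.flatMap (Tok.tn n) = u.tn n := by
  have hpart : ∀ s : List ℕ, (s.map .part).flatMap (Tok.tn n) = s := by
    intro s; induction s <;> simp_all [Tok.tn]
  rw [toks, List.flatMap_append, hpart, List.flatMap_def, List.map_flatten, List.flatten_flatten,
    List.map_ofFn, List.map_ofFn, tn, blocks]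
  refine congrArg (fun f : Fin u.m → List ℕ => u.sep 0 ++ (List.ofFn f).flatten)
    (funext fun i => ?_)
  rw [Function.comp_apply, Function.comp_apply, ← List.flatMap_def, List.flatMap_cons, hpart]
  by_cases ht : u.t i <;> simp [slot, ht, Tok.tn]

theorem part_mem_toks {j z : ℕ} (hj : j ≤ u.m) (hz : z ∈ u.sep j) :
    Tok.part z ∈ u.toks := by
  rcases j with _ | i
  · simp [toks, hz]
  · simp only [toks, List.mem_append, List.mem_flatten, List.mem_ofFn]
    exact .inr ⟨_, ⟨⟨i, hj⟩, rfl⟩, by simp [hz]⟩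

theorem slot_mem_toks {i : ℕ} (hi : i < u.m) : u.slot i ∈ u.toks := by
  simp only [toks, List.mem_append, List.mem_flatten, List.mem_ofFn]
  exact .inr ⟨_, ⟨⟨i, hi⟩, rfl⟩, List.mem_cons_self⟩

theorem slot_eq_v_iff {i : ℕ} : u.slot i = .v ↔ u.t i = false := by
  by_cases ht : u.t i <;> simp [slot, ht]

theorem big_slot {i : ℕ} (ht : u.t i = true) (hadj : u.adj i) : (u.slot i).Big := by
  simp [slot, ht, d, hadj, Tok.Big]

theorem guardedPair_part_slot {i z : ℕ} (hi : i < u.m) (hz : (u.sep i).getLast? = some z) :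
    GuardedPair (.part z) (u.slot i) := by
  refine ⟨fun hv => ?_, (nomatch ·)⟩
  have := u.v_left i hi ((u.slot_eq_v_iff).1 hv) (by rintro h; simp [h] at hz)
  simpa [Tok.Big, List.getLastD_eq_getLast?, hz] using this

theorem guardedPair_slot_part {i z : ℕ} (hi : i < u.m) (hz : (u.sep (i + 1)).head? = some z) :
    GuardedPair (u.slot i) (.part z) := by
  refine ⟨(nomatch ·), fun hv => ?_⟩
  have := u.v_right i hi ((u.slot_eq_v_iff).1 hv) (by rintro h; simp [h] at hz)
  simpa [Tok.Big, List.headD_eq_head?_getD, hz] using this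

theorem guardedPair_slot_slot {i : ℕ} (hi : i + 1 < u.m) (hs : u.sep (i + 1) = []) :
    GuardedPair (u.slot i) (u.slot (i + 1)) := by
  have hvv := u.vv i hi
  refine ⟨fun hv => u.big_slot ?_ (Or.inr ⟨hi, (u.slot_eq_v_iff).1 hv, hs⟩), fun hv => ?_⟩
  · by_contra ht
    exact hvv (by simpa using ht) ((u.slot_eq_v_iff).1 hv) hs
  · have ht := (u.slot_eq_v_iff).1 hv
    refine u.big_slot ?_ (Or.inl ⟨by omega, by simpa using ht, hs⟩)
    by_contra ht'
    exact hvv ht (by simpa using ht') hs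

theorem guarded_toks : Guarded u.toks := by
  refine (guarded_map_part _).append ?_ fun x hx y hy => ?_
  · rw [List.isChain_flatten (by simp [List.mem_ofFn])]
    refine ⟨fun l hl => ?_, List.isChain_ofFn.2 fun i hi x hx y hy => ?_⟩
    · obtain ⟨i, rfl⟩ := List.mem_ofFn.1 hl
      refine (guarded_map_part _).cons fun y hy => ?_
      obtain ⟨z, hz, rfl⟩ : ∃ z, (u.sep (i + 1)).head? = some z ∧ Tok.part z = y := by
        simpa using hy
      exact u.guardedPair_slot_part i.2 hz
    · obtain rfl : y = u.slot (i + 1) := by simpa using hy.symm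
      rw [List.getLast?_cons, List.getLast?_map] at hx
      cases hz : (u.sep (i + 1)).getLast? with
      | none =>
        obtain rfl : x = u.slot i := by simpa [hz] using hx.symm
        exact u.guardedPair_slot_slot hi (by simpa using hz)
      | some z =>
        obtain rfl : x = .part z := by simpa [hz] using hx.symm
        exact u.guardedPair_part_slot hi hz
  · obtain ⟨hm, hy⟩ := mem_head?_of_mem_head?_flatten_ofFn (fun _ => List.cons_ne_nil _ _) hy
    obtain rfl : y = u.slot 0 := by simpa using hy.symm
    obtain ⟨z, hz, rfl⟩ : ∃ z, (u.sep 0).getLast? = some z ∧ Tok.part z = x := by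
      simpa using hx
    exact u.guardedPair_part_slot hm hz

open Classical in
theorem phi_of_forall_ne_lam {l : List ℕ} (hl : ∀ c, l ≠ u.lam c) :
    u.phi l = if u.GKmem l then (⊤ : ℝ≥0∞) else 0 := by
  rw [phi, dif_neg (by simpa using hl)]

theorem gkmem_of_parses_erase {S C : List Tok} {X : List ℕ} (hT : u.toks = S ++ .part 1 :: C)
    (hX : Parses (S ++ C) X) (hpos : ∀ x ∈ X, 0 < x) : u.GKmem X := by
  refine ⟨X.sum + X.length + 1, by omega, ?_⟩
  rw [← u.flatMap_tn_toks, hT]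
  have hbound : ∀ x ∈ X, 0 < x ∧ x ≤ X.sum + X.length + 1 := fun x hx =>
    ⟨hpos x hx, (List.le_sum_of_mem hx).trans (by omega)⟩
  refine (hX.reflTransGen_flatMap_tn hbound (by omega)).trans ?_
  simp only [List.flatMap_append, List.flatMap_cons]
  exact reflTransGen_rel_append .refl
    (reflTransGen_rel_append (ReflTransGen.single rel_nil_one) .refl)

theorem exists_perm_lam_phi_eq_top (hv : ∃ i, i < u.m ∧ u.t i = false)
    (h1 : ∃ j, j ≤ u.m ∧ 1 ∈ u.sep j) (c : ℕ → ℕ) (hpos : ∀ x ∈ u.lam c, 0 < x) :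
    ∃ X, X.Perm (u.lam c) ∧ u.phi X = ⊤ := by
  obtain ⟨i, hi, hti⟩ := hv
  obtain ⟨j, hj, h1j⟩ := h1
  obtain ⟨S, C, hT⟩ := List.append_of_mem (u.part_mem_toks hj h1j)
  obtain ⟨L₁, _, hL, h₁, _, L₂, rfl, rfl, h₂⟩ :=
    parses_append_iff.1 (hT ▸ u.parses_toks_lam c)
  have hvSC : Tok.v ∈ S ++ C := by
    have := u.slot_mem_toks hi
    rw [hT, (u.slot_eq_v_iff).2 hti] at this
    simpa using this
  obtain ⟨X, hX1, hX⟩ := (h₁.append h₂).exists_perm_cons_one hvSC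
  have hXL : X.Perm (u.lam c) := hX1.trans (hL ▸ List.perm_middle.symm)
  refine ⟨X, hXL, ?_⟩
  rw [u.phi_of_forall_ne_lam ?_, if_pos (u.gkmem_of_parses_erase hT hX fun x hx =>
    hpos x (hXL.subset hx))]
  rintro c' rfl
  exact not_parses_of_parses_erase (hT ▸ u.guarded_toks) hX (hT ▸ u.parses_toks_lam c')

end UTilde

/-- if `ũ` has a v-interval and some separating composition has a part equal
to 1, then for every partition `λ` the sum of `φ_ũ` over all distinct compositions obtained
by permuting the parts of `λ` is `0` or `+∞`. -/
theorem symmetrization_zero_or_top (u : UTilde)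
    (hv : ∃ i, i < u.m ∧ u.t i = false)
    (h1 : ∃ i, i ≤ u.m ∧ (1 : ℕ) ∈ u.sep i) :
    ∀ l : List ℕ, (∀ n ∈ l, 0 < n) → l.Pairwise (· ≥ ·) →
      (∑' μ : {x : List ℕ // x.Perm l}, u.phi μ.1) = 0 ∨
      (∑' μ : {x : List ℕ // x.Perm l}, u.phi μ.1) = ⊤ := by
  intro l hl _
  by_cases hzero : ∀ μ : {x : List ℕ // x.Perm l}, u.phi μ.1 = 0
  · exact .inl (ENNReal.tsum_eq_zero.2 hzero)
  push Not at hzero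
  obtain ⟨⟨μ, hμ⟩, hne⟩ := hzero
  obtain ⟨X, hX, htop⟩ : ∃ X, X.Perm l ∧ u.phi X = ⊤ := by
    by_cases hlam : ∃ c, μ = u.lam c
    · obtain ⟨c, rfl⟩ := hlam
      obtain ⟨X, hX, htop⟩ :=
        u.exists_perm_lam_phi_eq_top hv h1 c fun x hx => hl x (hμ.subset hx)
      exact ⟨X, hX.trans hμ, htop⟩
    · push Not at hlam
      refine ⟨μ, hμ, ?_⟩
      rw [u.phi_of_forall_ne_lam hlam] at hne ⊢
      simpa using hne
  exact .inr (ENNReal.tsum_eq_top_of_eq_top ⟨⟨X, hX⟩, htop⟩)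

end GK
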